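/- arXiv:1902.00800 — 2 statements merged into one kernel-verified Lean document; each statement's English description precedes it below -/
import Mathlib

section
/- Let ξ1,…,ξn be i.i.d. standard Gaussian random variables, A ⊆ ℝⁿ, φ : ℝ → ℝ a 1-Lipschitz function with φ(0)=0, and G : ℝ → ℝ nondecreasing and convex. Then E[sup_{a ∈ A} G(Σᵢ ξᵢ φ(aᵢ))] ≤ E[sup_{a ∈ A} G(Σᵢ ξᵢ aᵢ)]. -/
open MeasureTheory ProbabilityTheory Set Matrix

/-!
The symmetrization argument of Ledoux and Talagrand: the coordinates `aᵢ` are replaced by `φ (aᵢ)`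
one at a time. For a single coordinate `j`, write `⟨ξ, a⟩ = h a + ξⱼ aⱼ` and pair `ξ` with its
reflection in the `j`-th coordinate, which has the same Gaussian law. What remains is the
deterministic inequality `G (sup (h + p)) + G (sup (h - p)) ≤ G (sup (h + q)) + G (sup (h - q))`
for `p` a contraction of `q`: the two arguments on the left have a smaller sum and a smaller
maximum than those on the right, an order that a nondecreasing convex `G` respects.
The intermediate suprema are integrable because each lies between an affine function of
`|⟨ξ, a₀⟩|` and a sum of copies of the original supremum at sign-flipped arguments.
-/

namespace ConvexOn

variable {G : ℝ → ℝ}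

theorem map_add_map_le_of_mem_Icc (hc : ConvexOn ℝ univ G) {x z a b : ℝ} (hx : x ∈ Icc a b)
    (hsum : x + z = a + b) : G x + G z ≤ G a + G b := by
  obtain ⟨hax, hxb⟩ := hx
  rcases hax.eq_or_lt with rfl | hax
  · rw [show z = b by linarith]
  obtain rfl : z = a + b - x := by linarith
  have hab : 0 < b - a := by linarith
  set t := (b - x) / (b - a)
  have ht : 0 ≤ t := div_nonneg (by linarith) hab.le
  have ht' : 0 ≤ 1 - t := by rw [one_sub_div hab.ne']; exact div_nonneg (by linarith) hab.le
  have hxt : t • a + (1 - t) • b = x := by simp only [t, smul_eq_mul]; field_simp; ring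
  have hzt : (1 - t) • a + t • b = a + b - x := by simp only [t, smul_eq_mul]; field_simp; ring
  have h₁ := hc.2 (mem_univ a) (mem_univ b) ht ht' (by ring)
  have h₂ := hc.2 (mem_univ a) (mem_univ b) ht' ht (by ring)
  rw [hxt, smul_eq_mul, smul_eq_mul] at h₁
  rw [hzt, smul_eq_mul, smul_eq_mul] at h₂
  linarith

theorem map_add_map_le_of_add_le_of_max_le (hc : ConvexOn ℝ univ G) (hm : Monotone G)
    {x y a b : ℝ} (hsum : x + y ≤ a + b) (hmax : max x y ≤ max a b) :
    G x + G y ≤ G a + G b := by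
  wlog hxy : x ≤ y generalizing x y
  · linarith [this (by linarith) (by rwa [max_comm]) (le_of_not_ge hxy)]
  wlog hab : a ≤ b generalizing a b
  · linarith [this (by linarith) (by rwa [max_comm b]) (le_of_not_ge hab)]
  rw [max_eq_right hxy, max_eq_right hab] at hmax
  rcases le_or_gt x a with hxa | hax
  · exact add_le_add (hm hxa) (hm hmax)
  · -- Enlarge `y` to `a + b - x`: the pair `x, a + b - x` lies in `[a, b]` and has the sum of `a, b`.
    have := hc.map_add_map_le_of_mem_Icc ⟨hax.le, hxy.trans hmax⟩ (add_sub_cancel x (a + b))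
    linarith [hm (show y ≤ a + b - x by linarith)]

theorem map_zero_sub_mul_abs_le (hc : ConvexOn ℝ univ G) (hm : Monotone G) (y : ℝ) :
    G 0 - (G 1 - G 0) * |y| ≤ G y := by
  rcases lt_or_ge y 0 with hy | hy
  · have := hc.slope_mono_adjacent (mem_univ y) (mem_univ 1) hy one_pos
    rw [abs_of_neg hy]
    rw [sub_zero, div_one, div_le_iff₀ (by linarith)] at this
    linarith
  · nlinarith [hm hy, hm zero_le_one, abs_nonneg y]

theorem bddAbove_of_bddAbove_image (hc : ConvexOn ℝ univ G) (hm : Monotone G)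
    (hG : ∃ u v, G u ≠ G v) {S : Set ℝ} (hS : BddAbove (G '' S)) : BddAbove S := by
  obtain ⟨u, v, huv⟩ := hG
  wlog h : u < v generalizing u v
  · exact this v u huv.symm ((le_of_not_gt h).lt_of_ne fun e => huv (e ▸ rfl))
  obtain ⟨B, hB⟩ := hS
  set s := (G v - G u) / (v - u)
  have hs : 0 < s := div_pos (sub_pos.2 ((hm h.le).lt_of_ne huv)) (sub_pos.2 h)
  refine ⟨max v (v + (B - G v) / s), fun z hz => ?_⟩
  by_contra! hlt
  obtain ⟨hvz, hlt⟩ := max_lt_iff.1 hlt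
  rw [← lt_sub_iff_add_lt', div_lt_iff₀ hs] at hlt
  have := hc.slope_mono_adjacent (mem_univ u) (mem_univ z) h hvz
  rw [le_div_iff₀ (sub_pos.2 hvz)] at this
  linarith [hB (mem_image_of_mem G hz)]

end ConvexOn

section SupOfPerturbation

variable {α : Type*} {A : Set α} {h p q : α → ℝ}

theorem csSup_image_add_add_csSup_image_sub_le (hA : A.Nonempty)
    (hpq : ∀ a ∈ A, ∀ b ∈ A, |p a - p b| ≤ |q a - q b|)
    (hbddAdd : BddAbove ((h + q) '' A)) (hbddSub : BddAbove ((h - q) '' A)) :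
    sSup ((h + p) '' A) + sSup ((h - p) '' A) ≤ sSup ((h + q) '' A) + sSup ((h - q) '' A) := by
  have hpair : ∀ a ∈ A, ∀ b ∈ A,
      (h a + p a) + (h b - p b) ≤ sSup ((h + q) '' A) + sSup ((h - q) '' A) := by
    intro a ha b hb
    have hqa : h a + q a ≤ sSup ((h + q) '' A) := le_csSup hbddAdd (mem_image_of_mem _ ha)
    have hqb : h b + q b ≤ sSup ((h + q) '' A) := le_csSup hbddAdd (mem_image_of_mem _ hb)
    have hqa' : h a - q a ≤ sSup ((h - q) '' A) := le_csSup hbddSub (mem_image_of_mem _ ha)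
    have hqb' : h b - q b ≤ sSup ((h - q) '' A) := le_csSup hbddSub (mem_image_of_mem _ hb)
    have := (le_abs_self _).trans (hpq a ha b hb)
    cases abs_cases (q a - q b) <;> linarith
  rw [← le_sub_iff_add_le]
  refine csSup_le (hA.image _) (forall_mem_image.2 fun a ha => ?_)
  rw [le_sub_comm]
  refine csSup_le (hA.image _) (forall_mem_image.2 fun b hb => ?_)
  rw [le_sub_iff_add_le, add_comm]
  exact hpair a ha b hb

theorem csSup_image_add_le_max (hA : A.Nonempty) (hpq : ∀ a ∈ A, |p a| ≤ |q a|)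
    (hbddAdd : BddAbove ((h + q) '' A)) (hbddSub : BddAbove ((h - q) '' A)) :
    sSup ((h + p) '' A) ≤ max (sSup ((h + q) '' A)) (sSup ((h - q) '' A)) := by
  refine csSup_le (hA.image _) (forall_mem_image.2 fun a ha => ?_)
  have hqa : h a + q a ≤ sSup ((h + q) '' A) := le_csSup hbddAdd (mem_image_of_mem _ ha)
  have hqa' : h a - q a ≤ sSup ((h - q) '' A) := le_csSup hbddSub (mem_image_of_mem _ ha)
  have := (le_abs_self _).trans (hpq a ha)
  rw [Pi.add_apply, le_max_iff]
  cases abs_cases (q a) <;> [left; right] <;> linarith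

theorem ConvexOn.map_csSup_add_map_csSup_le {G : ℝ → ℝ} (hc : ConvexOn ℝ univ G)
    (hm : Monotone G) (hA : A.Nonempty)
    (hpq : ∀ a ∈ A, ∀ b ∈ A, |p a - p b| ≤ |q a - q b|) (hpq₀ : ∀ a ∈ A, |p a| ≤ |q a|)
    (hbddAdd : BddAbove ((h + q) '' A)) (hbddSub : BddAbove ((h - q) '' A)) :
    G (sSup ((h + p) '' A)) + G (sSup ((h - p) '' A))
      ≤ G (sSup ((h + q) '' A)) + G (sSup ((h - q) '' A)) := by
  refine hc.map_add_map_le_of_add_le_of_max_le hm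
    (csSup_image_add_add_csSup_image_sub_le hA hpq hbddAdd hbddSub)
    (max_le (csSup_image_add_le_max hA hpq₀ hbddAdd hbddSub) ?_)
  rw [sub_eq_add_neg]
  exact csSup_image_add_le_max hA (fun a ha => (abs_neg (p a)).trans_le (hpq₀ a ha)) hbddAdd hbddSub

end SupOfPerturbation

theorem MeasureTheory.MeasurePreserving.integral_le_integral_of_add_comp_le {α : Type*}
    [MeasurableSpace α] {μ : Measure α} {T : α ≃ᵐ α} (hT : MeasurePreserving T μ μ)
    {f g : α → ℝ} (hf : Integrable f μ) (hg : Integrable g μ)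
    (hfg : ∀ x, f x + f (T x) ≤ g x + g (T x)) : ∫ x, f x ∂μ ≤ ∫ x, g x ∂μ := by
  have hfT := hT.integrable_comp_of_integrable hf
  have hgT := hT.integrable_comp_of_integrable hg
  have := integral_mono (hf.add hfT) (hg.add hgT) hfg
  rw [integral_add' hf hfT, integral_add' hg hgT] at this
  simp only [Function.comp_def, hT.integral_comp'] at this
  linarith

theorem measurePreserving_units_smul_gaussianReal (u : ℤˣ) :
    MeasurePreserving (u • · : ℝ → ℝ) (gaussianReal 0 1) (gaussianReal 0 1) := by
  rcases Int.units_eq_one_or u with rfl | rfl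
  · simp only [one_smul]
    exact MeasurePreserving.id _
  · refine ⟨by fun_prop, ?_⟩
    simpa [Units.neg_smul] using gaussianReal_map_neg (μ := 0) (v := 1)

section Gaussian

variable {ι : Type*} [Fintype ι]

theorem Matrix.dotProduct_update {R : Type*} [DecidableEq ι] [CommRing R]
    (v w : ι → R) (j : ι) (x : R) : v ⬝ᵥ Function.update w j x = v ⬝ᵥ w + v j * (x - w j) := by
  have : Function.update w j x = w + Pi.single j (x - w j) := by
    ext i
    rcases eq_or_ne i j with rfl | hi <;> simp [*]
  rw [this, dotProduct_add, dotProduct_single]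

theorem Matrix.update_dotProduct {R : Type*} [DecidableEq ι] [CommRing R]
    (v w : ι → R) (j : ι) (x : R) : Function.update v j x ⬝ᵥ w = v ⬝ᵥ w + (x - v j) * w j := by
  rw [dotProduct_comm, dotProduct_update, dotProduct_comm, mul_comm]

theorem exists_dotProduct_le_units_smul_dotProduct {a b : ι → ℝ}
    (hba : ∀ i, |b i| ≤ |a i|) (ξ : ι → ℝ) : ∃ ε : ι → ℤˣ, ξ ⬝ᵥ b ≤ (ε • ξ) ⬝ᵥ a := by
  refine ⟨fun i => if 0 ≤ ξ i * a i then 1 else -1, Finset.sum_le_sum fun i _ => ?_⟩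
  have hb : ξ i * b i ≤ |ξ i * a i| :=
    calc ξ i * b i ≤ |ξ i| * |b i| := (le_abs_self _).trans_eq (abs_mul _ _)
      _ ≤ |ξ i| * |a i| := mul_le_mul_of_nonneg_left (hba i) (abs_nonneg _)
      _ = |ξ i * a i| := (abs_mul _ _).symm
  change ξ i * b i ≤ (if 0 ≤ ξ i * a i then (1 : ℤˣ) else -1) • ξ i * a i
  split_ifs with h
  · rwa [one_smul, ← abs_of_nonneg h]
  · rwa [Units.neg_smul, one_smul, neg_mul, ← abs_of_neg (not_le.1 h)]

theorem measurePreserving_units_smul_pi_gaussianReal (ε : ι → ℤˣ) :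
    MeasurePreserving (MeasurableEquiv.smul ε) (Measure.pi fun _ : ι => gaussianReal 0 1)
      (Measure.pi fun _ : ι => gaussianReal 0 1) :=
  measurePreserving_pi _ _ fun i => measurePreserving_units_smul_gaussianReal (ε i)

theorem integrable_dotProduct_pi_gaussianReal (b : ι → ℝ) :
    Integrable (fun ξ : ι → ℝ => ξ ⬝ᵥ b) (Measure.pi fun _ : ι => gaussianReal 0 1) := by
  refine integrable_finsetSum _ fun i _ => Integrable.mul_const ?_ (b i)
  exact (measurePreserving_eval (fun _ : ι => gaussianReal 0 1) i).integrable_comp_of_integrable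
    ((memLp_id_gaussianReal 1).integrable le_rfl)

noncomputable def supDot (B : Set (ι → ℝ)) (ξ : ι → ℝ) : ℝ := sSup ((ξ ⬝ᵥ ·) '' B)

theorem lowerSemicontinuous_supDot {B : Set (ι → ℝ)} (hB : ∀ ξ, BddAbove ((ξ ⬝ᵥ ·) '' B)) :
    LowerSemicontinuous (supDot B) := by
  change LowerSemicontinuous fun ξ => sSup ((ξ ⬝ᵥ ·) '' B)
  simp_rw [sSup_image']
  refine lowerSemicontinuous_ciSup (fun ξ => ?_) fun b => ?_
  · rw [← image_eq_range]
    exact hB ξ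
  · exact (continuous_id.dotProduct continuous_const).lowerSemicontinuous

theorem Monotone.map_supDot {G : ℝ → ℝ} (hm : Monotone G) (hG : Continuous G)
    {B : Set (ι → ℝ)} (hB : B.Nonempty) {ξ : ι → ℝ} (hbdd : BddAbove ((ξ ⬝ᵥ ·) '' B)) :
    G (supDot B ξ) = sSup ((fun b => G (ξ ⬝ᵥ b)) '' B) := by
  rw [supDot, hm.map_csSup_of_continuousAt hG.continuousAt (hB.image _) hbdd, image_image]

section Domination

variable [DecidableEq ι] {A B : Set (ι → ℝ)}

theorem dotProduct_le_sup'_supDot_smul (hA : ∀ ξ, BddAbove ((ξ ⬝ᵥ ·) '' A))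
    (hBA : ∀ b ∈ B, ∃ a ∈ A, ∀ i, |b i| ≤ |a i|) {b : ι → ℝ} (hb : b ∈ B) (ξ : ι → ℝ) :
    ξ ⬝ᵥ b ≤ Finset.univ.sup' Finset.univ_nonempty fun ε : ι → ℤˣ => supDot A (ε • ξ) := by
  obtain ⟨a, ha, hba⟩ := hBA b hb
  obtain ⟨ε, hε⟩ := exists_dotProduct_le_units_smul_dotProduct hba ξ
  exact hε.trans ((le_csSup (hA _) (mem_image_of_mem _ ha)).trans
    (Finset.le_sup' (fun ε : ι → ℤˣ => supDot A (ε • ξ)) (Finset.mem_univ ε)))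

theorem bddAbove_dotProduct_of_dominated (hA : ∀ ξ, BddAbove ((ξ ⬝ᵥ ·) '' A))
    (hBA : ∀ b ∈ B, ∃ a ∈ A, ∀ i, |b i| ≤ |a i|) (ξ : ι → ℝ) : BddAbove ((ξ ⬝ᵥ ·) '' B) :=
  ⟨_, forall_mem_image.2 fun _ hb => dotProduct_le_sup'_supDot_smul hA hBA hb ξ⟩

theorem Monotone.map_supDot_le_sum_abs {G : ℝ → ℝ} (hm : Monotone G)
    (hA : ∀ ξ, BddAbove ((ξ ⬝ᵥ ·) '' A)) (hB : B.Nonempty)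
    (hBA : ∀ b ∈ B, ∃ a ∈ A, ∀ i, |b i| ≤ |a i|) (ξ : ι → ℝ) :
    G (supDot B ξ) ≤ ∑ ε : ι → ℤˣ, |G (supDot A (ε • ξ))| := by
  obtain ⟨ε, -, hε⟩ := Finset.exists_mem_eq_sup' Finset.univ_nonempty
    fun ε : ι → ℤˣ => supDot A (ε • ξ)
  have hsup : supDot B ξ ≤ supDot A (ε • ξ) :=
    hε ▸ csSup_le (hB.image _)
      (forall_mem_image.2 fun _ hb => dotProduct_le_sup'_supDot_smul hA hBA hb ξ)
  exact (hm hsup).trans ((le_abs_self _).trans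
    (Finset.single_le_sum (fun ε _ => abs_nonneg (G (supDot A (ε • ξ)))) (Finset.mem_univ ε)))

theorem ConvexOn.integrable_map_supDot_of_dominated {G : ℝ → ℝ} (hc : ConvexOn ℝ univ G)
    (hm : Monotone G) (hA : ∀ ξ, BddAbove ((ξ ⬝ᵥ ·) '' A))
    (hint : Integrable (fun ξ => G (supDot A ξ)) (Measure.pi fun _ : ι => gaussianReal 0 1))
    (hB : B.Nonempty) (hBA : ∀ b ∈ B, ∃ a ∈ A, ∀ i, |b i| ≤ |a i|) :
    Integrable (fun ξ => G (supDot B ξ)) (Measure.pi fun _ : ι => gaussianReal 0 1) := by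
  obtain ⟨b₀, hb₀⟩ := hB
  have hbdd := bddAbove_dotProduct_of_dominated hA hBA
  refine integrable_of_le_of_le (g₁ := fun ξ => G 0 - (G 1 - G 0) * |ξ ⬝ᵥ b₀|)
    (g₂ := fun ξ => ∑ ε : ι → ℤˣ, |G (supDot A (ε • ξ))|) ?_ ?_ ?_ ?_ ?_
  · exact ((continuousOn_univ.1 (hc.continuousOn isOpen_univ)).measurable.comp
      (lowerSemicontinuous_supDot hbdd).measurable).aestronglyMeasurable
  · exact ae_of_all _ fun ξ => (hc.map_zero_sub_mul_abs_le hm _).trans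
      (hm (le_csSup (hbdd ξ) (mem_image_of_mem _ hb₀)))
  · exact ae_of_all _ (hm.map_supDot_le_sum_abs hA ⟨b₀, hb₀⟩ hBA)
  · exact (integrable_const _).sub ((integrable_dotProduct_pi_gaussianReal b₀).abs.const_mul _)
  · exact integrable_finsetSum _ fun ε _ =>
      ((measurePreserving_units_smul_pi_gaussianReal ε).integrable_comp_of_integrable hint).abs

end Domination

section Contraction

variable [DecidableEq ι] {G φ : ℝ → ℝ}

theorem ConvexOn.integral_map_supDot_image_update_le (hc : ConvexOn ℝ univ G) (hm : Monotone G)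
    (hφ : LipschitzWith 1 φ) (hφ0 : φ 0 = 0) (j : ι) {B : Set (ι → ℝ)} (hB : B.Nonempty)
    (hbdd : ∀ ξ, BddAbove ((ξ ⬝ᵥ ·) '' B))
    (hint : Integrable (fun ξ => G (supDot B ξ)) (Measure.pi fun _ : ι => gaussianReal 0 1))
    (hint' : Integrable (fun ξ => G (supDot ((fun b => Function.update b j (φ (b j))) '' B) ξ))
      (Measure.pi fun _ : ι => gaussianReal 0 1)) :
    ∫ ξ, G (supDot ((fun b => Function.update b j (φ (b j))) '' B) ξ)
        ∂(Measure.pi fun _ : ι => gaussianReal 0 1)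
      ≤ ∫ ξ, G (supDot B ξ) ∂(Measure.pi fun _ : ι => gaussianReal 0 1) := by
  set ε : ι → ℤˣ := Pi.mulSingle j (-1)
  refine (measurePreserving_units_smul_pi_gaussianReal ε).integral_le_integral_of_add_comp_le
    hint' hint fun ξ => ?_
  simp only [MeasurableEquiv.smul_apply]
  have hflip : ε • ξ = Function.update ξ j (-ξ j) := by
    ext i
    rcases eq_or_ne i j with rfl | hi <;> simp [ε, *]
  let h : (ι → ℝ) → ℝ := fun b => ξ ⬝ᵥ b - ξ j * b j
  let p : (ι → ℝ) → ℝ := fun b => ξ j * φ (b j)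
  let q : (ι → ℝ) → ℝ := fun b => ξ j * b j
  let Φ : (ι → ℝ) → (ι → ℝ) := fun b => Function.update b j (φ (b j))
  have hp : h + p = (ξ ⬝ᵥ ·) ∘ Φ := funext fun b => by
    simp only [Pi.add_apply, Function.comp_apply, h, p, Φ, dotProduct_update]
    ring
  have hp' : h - p = (ε • ξ ⬝ᵥ ·) ∘ Φ := funext fun b => by
    simp only [Pi.sub_apply, Function.comp_apply, h, p, Φ, hflip, update_dotProduct,
      dotProduct_update, Function.update_self]
    ring
  have hq : h + q = (ξ ⬝ᵥ ·) := funext fun b => sub_add_cancel _ _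
  have hq' : h - q = (ε • ξ ⬝ᵥ ·) := funext fun b => by
    simp only [Pi.sub_apply, h, q, hflip, update_dotProduct]
    ring
  have hpq : ∀ a ∈ B, ∀ b ∈ B, |p a - p b| ≤ |q a - q b| := fun a _ b _ => by
    simp only [p, q, ← mul_sub, abs_mul]
    gcongr |ξ j| * ?_
    simpa using hφ.norm_sub_le (a j) (b j)
  have hpq₀ : ∀ b ∈ B, |p b| ≤ |q b| := fun b _ => by
    simp only [p, q, abs_mul]
    gcongr |ξ j| * ?_
    simpa using hφ.norm_le_mul hφ0 (b j)
  have hsup := hc.map_csSup_add_map_csSup_le hm hB hpq hpq₀ (hq ▸ hbdd ξ) (hq' ▸ hbdd (ε • ξ))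
  rwa [hp, hp', hq, hq', image_comp, image_comp] at hsup

theorem ConvexOn.integral_map_supDot_image_piecewise_le (hc : ConvexOn ℝ univ G)
    (hm : Monotone G) (hφ : LipschitzWith 1 φ) (hφ0 : φ 0 = 0) {A : Set (ι → ℝ)}
    (hA : A.Nonempty) (hbdd : ∀ ξ, BddAbove ((ξ ⬝ᵥ ·) '' A))
    (hint : Integrable (fun ξ => G (supDot A ξ)) (Measure.pi fun _ : ι => gaussianReal 0 1))
    (s : Finset ι) :
    ∫ ξ, G (supDot ((fun a => s.piecewise (fun i => φ (a i)) a) '' A) ξ)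
        ∂(Measure.pi fun _ : ι => gaussianReal 0 1)
      ≤ ∫ ξ, G (supDot A ξ) ∂(Measure.pi fun _ : ι => gaussianReal 0 1) := by
  have hdom : ∀ s : Finset ι, ∀ b ∈ (fun a => s.piecewise (fun i => φ (a i)) a) '' A,
      ∃ a ∈ A, ∀ i, |b i| ≤ |a i| := by
    rintro s _ ⟨a, ha, rfl⟩
    refine ⟨a, ha, fun i => ?_⟩
    by_cases hi : i ∈ s
    · simpa [hi] using hφ.norm_le_mul hφ0 (a i)
    · simp [hi]
  induction s using Finset.induction_on with
  | empty => simp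
  | insert j s hj ih =>
    have himage : (fun a => (insert j s).piecewise (fun i => φ (a i)) a) '' A
        = (fun b => Function.update b j (φ (b j))) ''
          ((fun a => s.piecewise (fun i => φ (a i)) a) '' A) := by
      rw [image_image]
      congr! 2 with a
      rw [Finset.piecewise_insert, Finset.piecewise_eq_of_notMem _ _ _ hj]
    have hint_s := hc.integrable_map_supDot_of_dominated hm hbdd hint (hA.image _) (hdom s)
    have hint_js :=
      hc.integrable_map_supDot_of_dominated hm hbdd hint (hA.image _) (hdom (insert j s))
    rw [himage] at hint_js ⊢
    exact (hc.integral_map_supDot_image_update_le hm hφ hφ0 j (hA.image _)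
      (bddAbove_dotProduct_of_dominated hbdd (hdom s)) hint_s hint_js).trans ih

end Contraction

end Gaussian

theorem gaussian_contraction_inequality_general
    (n : ℕ) (A : Set (Fin n → ℝ)) (hA : A.Nonempty)
    (φ : ℝ → ℝ) (hφ : LipschitzWith 1 φ) (hφ0 : φ 0 = 0)
    (G : ℝ → ℝ) (hGmono : Monotone G) (hGconv : ConvexOn ℝ Set.univ G)
    (hbdd2 : ∀ ξ : Fin n → ℝ, BddAbove ((fun a => G (∑ i, ξ i * a i)) '' A))
    (hint2 : Integrable (fun ξ : Fin n → ℝ => sSup ((fun a => G (∑ i, ξ i * a i)) '' A))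
      (Measure.pi fun _ : Fin n => gaussianReal 0 1)) :
    ∫ ξ : Fin n → ℝ, sSup ((fun a => G (∑ i, ξ i * φ (a i))) '' A)
        ∂(Measure.pi fun _ : Fin n => gaussianReal 0 1)
      ≤ ∫ ξ : Fin n → ℝ, sSup ((fun a => G (∑ i, ξ i * a i)) '' A)
        ∂(Measure.pi fun _ : Fin n => gaussianReal 0 1) := by
  by_cases hG : ∃ u v, G u ≠ G v
  swap
  · -- For constant `G` the sums may be unbounded above, but then both integrands agree.
    push Not at hG
    obtain ⟨c, rfl⟩ : ∃ c, G = fun _ => c := ⟨G 0, funext fun x => hG x 0⟩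
    exact le_rfl
  have hGcont : Continuous G := continuousOn_univ.1 (hGconv.continuousOn isOpen_univ)
  have hbdd : ∀ ξ : Fin n → ℝ, BddAbove ((ξ ⬝ᵥ ·) '' A) := fun ξ =>
    hGconv.bddAbove_of_bddAbove_image hGmono hG (by rw [image_image]; exact hbdd2 ξ)
  have hφA : ∀ b ∈ (fun a i => φ (a i)) '' A, ∃ a ∈ A, ∀ i, |b i| ≤ |a i| := by
    rintro _ ⟨a, ha, rfl⟩
    exact ⟨a, ha, fun i => by simpa using hφ.norm_le_mul hφ0 (a i)⟩
  have hsupA : (fun ξ => G (supDot A ξ)) = fun ξ => sSup ((fun a => G (∑ i, ξ i * a i)) '' A) :=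
    funext fun ξ => hGmono.map_supDot hGcont hA (hbdd ξ)
  have hsupφA : (fun ξ => G (supDot ((fun a i => φ (a i)) '' A) ξ))
      = fun ξ => sSup ((fun a => G (∑ i, ξ i * φ (a i))) '' A) := funext fun ξ => by
    rw [hGmono.map_supDot hGcont (hA.image _) (bddAbove_dotProduct_of_dominated hbdd hφA ξ),
      image_image]
    rfl
  have hcontract := hGconv.integral_map_supDot_image_piecewise_le hGmono hφ hφ0 hA hbdd
    (hsupA ▸ hint2) Finset.univ
  simp only [Finset.piecewise_univ] at hcontract
  rwa [hsupA, hsupφA] at hcontract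

/-- **Gaussian contraction.** For i.i.d. standard Gaussians
`ξ₁,…,ξₙ`, a `1`-Lipschitz `φ` with `φ(0)=0`, and `G` nondecreasing and convex,
`E[sup_{a∈A} G(∑ᵢ ξᵢ φ(aᵢ))] ≤ E[sup_{a∈A} G(∑ᵢ ξᵢ aᵢ)]`. -/
theorem gaussian_contraction_inequality
    (n : ℕ) (A : Set (Fin n → ℝ)) (hA : A.Nonempty)
    (φ : ℝ → ℝ) (hφ : LipschitzWith 1 φ) (hφ0 : φ 0 = 0)
    (G : ℝ → ℝ) (hGmono : Monotone G) (hGconv : ConvexOn ℝ Set.univ G)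
    (hbdd1 : ∀ ξ : Fin n → ℝ, BddAbove ((fun a => G (∑ i, ξ i * φ (a i))) '' A))
    (hbdd2 : ∀ ξ : Fin n → ℝ, BddAbove ((fun a => G (∑ i, ξ i * a i)) '' A))
    (hint1 : Integrable (fun ξ : Fin n → ℝ => sSup ((fun a => G (∑ i, ξ i * φ (a i))) '' A))
      (Measure.pi fun _ : Fin n => gaussianReal 0 1))
    (hint2 : Integrable (fun ξ : Fin n → ℝ => sSup ((fun a => G (∑ i, ξ i * a i)) '' A))
      (Measure.pi fun _ : Fin n => gaussianReal 0 1)) :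
    ∫ ξ : Fin n → ℝ, sSup ((fun a => G (∑ i, ξ i * φ (a i))) '' A)
        ∂(Measure.pi fun _ : Fin n => gaussianReal 0 1)
      ≤ ∫ ξ : Fin n → ℝ, sSup ((fun a => G (∑ i, ξ i * a i)) '' A)
        ∂(Measure.pi fun _ : Fin n => gaussianReal 0 1) :=
  gaussian_contraction_inequality_general n A hA φ hφ hφ0 G hGmono hGconv hbdd2 hint2
end

section
/- Complexity bound for ReLU networks: Let ℱ_{L,V} be the class of depth-L ReLU networks on [−1,1]^d with total path-variation at most V (arbitrary widths), and let X1,…,Xn ∈ [−1,1]^d. Then the empirical Rademacher complexity E[sup_{f∈ℱ_{L,V}} Σᵢ ξᵢ f(Xᵢ)] is at most V·√(2n(L log 2 + log(2d))), where ξᵢ are i.i.d. Rademacher. -/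
open Finset

/-- Expectation over i.i.d. Rademacher signs `ξ ∈ {−1,+1}ⁿ` (uniform). -/
noncomputable def radAvg (n : ℕ) (F : (Fin n → ℝ) → ℝ) : ℝ :=
  (∑ ε : Fin n → Bool, F (fun i => if ε i then 1 else -1)) / 2 ^ n

/-- One network layer applied to a class of functions:
convex combinations of `±ReLU` compositions of members of `F`. -/
noncomputable def reluLayer (d : ℕ) (F : Set ((Fin d → ℝ) → ℝ)) : Set ((Fin d → ℝ) → ℝ) :=
  {g | ∃ (k : ℕ) (c : Fin k → ℝ) (f : Fin k → ((Fin d → ℝ) → ℝ)),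
    (∀ j, f j ∈ F) ∧ (∑ j, |c j| ≤ 1) ∧ ∀ x, g x = ∑ j, c j * max (f j x) 0}

/-- The `2d` signed coordinate functions scaled by `V`. -/
noncomputable def initClass (d : ℕ) (V : ℝ) : Set ((Fin d → ℝ) → ℝ) :=
  {f | ∃ j : Fin d, f = (fun x => V * x j) ∨ f = (fun x => -(V * x j))}

/-- The class `ℱ_{L,V}` of depth-`L` ReLU networks with path-variation at most `V`. -/
noncomputable def deepReluClass (d L : ℕ) (V : ℝ) : Set ((Fin d → ℝ) → ℝ) :=
  (reluLayer d)^[L] (initClass d V)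

/-!
Let `A_L ⊆ ℝⁿ` be the set of vectors `(f X₁, …, f Xₙ)` with `f ∈ ℱ_{L,V}`, and let
`h_A σ = sup_{a ∈ A} ⟪σ, a⟫`. By Jensen, `exp (λ 𝔼 h_{A_L} ξ) ≤ 𝔼 exp (λ h_{A_L} ξ)`, and this
exponential moment at most doubles per layer. Indeed every point of `A_{L+1}` is an absolutely convex
combination of points of `ReLU(A_L)`, so `h_{A_{L+1}} σ ≤ max (h_{ReLU(A_L)} σ) (h_{ReLU(A_L)} (-σ))`;
bounding `exp ∘ max` by a sum and using the symmetry `ξ ↦ -ξ` costs a factor `2`, and the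
Ledoux–Talagrand contraction principle (proved one coordinate at a time, pairing sign vectors that
differ only there) removes the `1`-Lipschitz `ReLU`. At depth `0`, `A_0` consists of `2d` vectors of
sup-norm at most `V`, and `cosh x ≤ exp (x² / 2)` gives `𝔼 exp (λ h_{A_0} ξ) ≤ 2d exp (n λ² V² / 2)`.
Hence `λ 𝔼 h_{A_L} ξ ≤ L log 2 + log (2d) + n λ² V² / 2` for every `λ > 0`, and the optimal choice
of `λ` gives the bound.
-/

open Function

theorem Real.exp_add_exp_le_exp_add_exp {p q u v : ℝ} (hp : p ≤ max u v) (hq : q ≤ max u v)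
    (hpq : p + q ≤ u + v) : Real.exp p + Real.exp q ≤ Real.exp u + Real.exp v := by
  wlog hvu : v ≤ u generalizing u v
  · rw [add_comm (Real.exp u)]
    exact this (max_comm u v ▸ hp) (max_comm u v ▸ hq) (by linarith) (by linarith)
  wlog hqp : q ≤ p generalizing p q
  · rw [add_comm (Real.exp p)]
    exact this hq hp (by linarith) (by linarith)
  rw [max_eq_left hvu] at hp
  rcases le_total q v with hqv | hvq
  · exact add_le_add (Real.exp_le_exp.2 hp) (Real.exp_le_exp.2 hqv)
  -- `exp u + exp v - exp p - exp (u + v - p) = (exp u - exp p) (exp p - exp v) / exp p`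
  have hmul : Real.exp p * Real.exp (u + v - p) = Real.exp u * Real.exp v := by
    rw [← Real.exp_add, ← Real.exp_add]; ring_nf
  have hq' : Real.exp q ≤ Real.exp (u + v - p) := Real.exp_le_exp.2 (by linarith)
  have hup : Real.exp p ≤ Real.exp u := Real.exp_le_exp.2 hp
  have hvp : Real.exp v ≤ Real.exp p := Real.exp_le_exp.2 (hvq.trans hqp)
  nlinarith [Real.exp_pos p, mul_nonneg (sub_nonneg.2 hup) (sub_nonneg.2 hvp)]

theorem LipschitzWith.abs_sub_le {φ : ℝ → ℝ} (hφ : LipschitzWith 1 φ) (x y : ℝ) :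
    |φ x - φ y| ≤ |x - y| := by
  simpa [Real.dist_eq] using hφ.dist_le_mul x y

theorem LipschitzWith.abs_apply_le {φ : ℝ → ℝ} (hφ : LipschitzWith 1 φ) (hφ0 : φ 0 = 0) (x : ℝ) :
    |φ x| ≤ |x| := by
  simpa [hφ0] using hφ.abs_sub_le x 0

theorem exp_mul_sSup_add_exp_mul_sSup_le_of_lipschitzWith {α : Type*} {S : Set α}
    (hS : S.Nonempty) {φ : ℝ → ℝ} (hφ : LipschitzWith 1 φ) (hφ0 : φ 0 = 0) {l : ℝ} (hl : 0 ≤ l)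
    (B t : α → ℝ) (hu : BddAbove ((fun a => B a + t a) '' S))
    (hv : BddAbove ((fun a => B a - t a) '' S)) :
    Real.exp (l * sSup ((fun a => B a + φ (t a)) '' S)) +
        Real.exp (l * sSup ((fun a => B a - φ (t a)) '' S)) ≤
      Real.exp (l * sSup ((fun a => B a + t a) '' S)) +
        Real.exp (l * sSup ((fun a => B a - t a) '' S)) := by
  set u := sSup ((fun a => B a + t a) '' S)
  set v := sSup ((fun a => B a - t a) '' S)
  set P := sSup ((fun a => B a + φ (t a)) '' S)
  set Q := sSup ((fun a => B a - φ (t a)) '' S)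
  have hBu : ∀ a ∈ S, B a + t a ≤ u := fun a ha => le_csSup hu ⟨a, ha, rfl⟩
  have hBv : ∀ a ∈ S, B a - t a ≤ v := fun a ha => le_csSup hv ⟨a, ha, rfl⟩
  have hB_abs : ∀ a ∈ S, B a + |t a| ≤ max u v := fun a ha => by
    rcases abs_cases (t a) with ⟨h, -⟩ | ⟨h, -⟩
    · exact le_max_of_le_left (by rw [h]; exact hBu a ha)
    · exact le_max_of_le_right (by rw [h]; exact hBv a ha)
  have hP : P ≤ max u v := csSup_le (hS.image _) <| by
    rintro _ ⟨a, ha, rfl⟩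
    linarith [hB_abs a ha, (abs_le.1 (hφ.abs_apply_le hφ0 (t a))).2]
  have hQ : Q ≤ max u v := csSup_le (hS.image _) <| by
    rintro _ ⟨a, ha, rfl⟩
    linarith [hB_abs a ha, (abs_le.1 (hφ.abs_apply_le hφ0 (t a))).1]
  have hpair : ∀ a ∈ S, ∀ b ∈ S, (B a + φ (t a)) + (B b - φ (t b)) ≤ u + v := by
    intro a ha b hb
    have := (abs_le.1 (hφ.abs_sub_le (t a) (t b))).2
    rcases abs_cases (t a - t b) with ⟨h, -⟩ | ⟨h, -⟩
    · linarith [hBu a ha, hBv b hb]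
    · linarith [hBu b hb, hBv a ha]
  have hPQ : P + Q ≤ u + v := by
    have hQ' : ∀ a ∈ S, Q ≤ u + v - (B a + φ (t a)) := fun a ha =>
      csSup_le (hS.image _) (by rintro _ ⟨b, hb, rfl⟩; linarith [hpair a ha b hb])
    have : P ≤ u + v - Q := csSup_le (hS.image _) <| by
      rintro _ ⟨a, ha, rfl⟩; linarith [hQ' a ha]
    linarith
  apply Real.exp_add_exp_le_exp_add_exp
  · rw [← mul_max_of_nonneg _ _ hl]; exact mul_le_mul_of_nonneg_left hP hl
  · rw [← mul_max_of_nonneg _ _ hl]; exact mul_le_mul_of_nonneg_left hQ hl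
  · nlinarith

noncomputable def supportFun {ι : Type*} [Fintype ι] (S : Set (ι → ℝ)) (σ : ι → ℝ) : ℝ :=
  sSup ((σ ⬝ᵥ ·) '' S)

section SupportFun

variable {ι : Type*} [Fintype ι] {S : Set (ι → ℝ)}

theorem bddAbove_dotProduct_image (hS : Bornology.IsBounded S) (σ : ι → ℝ) :
    BddAbove ((σ ⬝ᵥ ·) '' S) :=
  ((hS.isCompact_closure.image (continuous_const.dotProduct continuous_id)).bddAbove).mono
    (Set.image_mono subset_closure)

theorem dotProduct_le_supportFun (hS : Bornology.IsBounded S) {a : ι → ℝ} (ha : a ∈ S)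
    (σ : ι → ℝ) : σ ⬝ᵥ a ≤ supportFun S σ :=
  le_csSup (bddAbove_dotProduct_image hS σ) ⟨a, ha, rfl⟩

theorem dotProduct_update [DecidableEq ι] (σ a : ι → ℝ) (k : ι) (x : ℝ) :
    σ ⬝ᵥ update a k x = σ ⬝ᵥ a + σ k * (x - a k) := by
  have : update a k x = a + Pi.single k (x - a k) := by
    ext i; rcases eq_or_ne i k with rfl | h <;> simp [*]
  rw [this, dotProduct_add, dotProduct_single]

theorem supportFun_update_add_le [DecidableEq ι] (hS : Bornology.IsBounded S) (hS0 : S.Nonempty)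
    {φ : ℝ → ℝ} (hφ : LipschitzWith 1 φ) (hφ0 : φ 0 = 0) {l : ℝ} (hl : 0 ≤ l) (k : ι)
    {σ : ι → ℝ} (hσ : σ k = 1) :
    Real.exp (l * supportFun ((fun a => update a k (φ (a k))) '' S) σ) +
        Real.exp (l * supportFun ((fun a => update a k (φ (a k))) '' S) (update σ k (-1))) ≤
      Real.exp (l * supportFun S σ) + Real.exp (l * supportFun S (update σ k (-1))) := by
  set B : (ι → ℝ) → ℝ := fun a => σ ⬝ᵥ a - a k
  have hflip (a : ι → ℝ) : update σ k (-1) ⬝ᵥ a = σ ⬝ᵥ a - 2 * a k := by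
    rw [dotProduct_comm, dotProduct_update, dotProduct_comm, hσ]; ring
  have hφS (τ : ι → ℝ) : supportFun ((fun a => update a k (φ (a k))) '' S) τ =
      sSup ((fun a => τ ⬝ᵥ a + τ k * (φ (a k) - a k)) '' S) := by
    simp only [supportFun, Set.image_image, dotProduct_update]
  have e1 : supportFun ((fun a => update a k (φ (a k))) '' S) σ =
      sSup ((fun a => B a + φ (a k)) '' S) := by
    rw [hφS, hσ]; congr 2; funext a; ring
  have e2 : supportFun ((fun a => update a k (φ (a k))) '' S) (update σ k (-1)) =
      sSup ((fun a => B a - φ (a k)) '' S) := by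
    rw [hφS]; congr 2; funext a; rw [hflip, update_self]; ring
  have e3 : supportFun S σ = sSup ((fun a => B a + a k) '' S) := by
    simp only [supportFun, B, sub_add_cancel]
  have e4 : supportFun S (update σ k (-1)) = sSup ((fun a => B a - a k) '' S) := by
    unfold supportFun; congr 2; funext a; rw [hflip]; ring
  rw [e1, e2, e3, e4]
  apply exp_mul_sSup_add_exp_mul_sSup_le_of_lipschitzWith hS0 hφ hφ0 hl
  · simpa only [B, sub_add_cancel] using bddAbove_dotProduct_image hS σ
  · convert bddAbove_dotProduct_image hS (update σ k (-1)) using 2 with a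
    rw [hflip]; ring

end SupportFun

theorem Function.Involutive.sum_comp {ι M : Type*} [Fintype ι] [AddCommMonoid M] {e : ι → ι}
    (he : Involutive e) (F : ι → M) : ∑ i, F (e i) = ∑ i, F i :=
  Fintype.sum_bijective e he.bijective _ _ fun _ => rfl

theorem Fintype.sum_le_sum_of_involutive {ι : Type*} [Fintype ι] {F G : ι → ℝ} (e : ι → ι)
    (he : Involutive e) (h : ∀ i, F i + F (e i) ≤ G i + G (e i)) : ∑ i, F i ≤ ∑ i, G i := by
  have := Finset.sum_le_sum fun i (_ : i ∈ univ) => h i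
  rw [sum_add_distrib, sum_add_distrib, he.sum_comp F, he.sum_comp G] at this
  linarith

section RademacherAverage

variable {n : ℕ}

def signVector (ε : Fin n → Bool) : Fin n → ℝ := fun i => if ε i then 1 else -1

theorem radAvg_eq (F : (Fin n → ℝ) → ℝ) : radAvg n F = (∑ ε, F (signVector ε)) / 2 ^ n := rfl

theorem signVector_update (ε : Fin n → Bool) (k : Fin n) (b : Bool) :
    signVector (update ε k b) = update (signVector ε) k (if b then 1 else -1) := by
  ext i; rcases eq_or_ne i k with rfl | h <;> simp [signVector, *]

theorem radAvg_mono {F G : (Fin n → ℝ) → ℝ} (h : ∀ σ, F σ ≤ G σ) : radAvg n F ≤ radAvg n G :=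
  div_le_div_of_nonneg_right (sum_le_sum fun ε _ => h _) (by positivity)

theorem radAvg_add (F G : (Fin n → ℝ) → ℝ) :
    radAvg n (fun σ => F σ + G σ) = radAvg n F + radAvg n G := by
  simp only [radAvg_eq, sum_add_distrib, add_div]

theorem radAvg_sum {κ : Type*} (s : Finset κ) (F : κ → (Fin n → ℝ) → ℝ) :
    radAvg n (fun σ => ∑ j ∈ s, F j σ) = ∑ j ∈ s, radAvg n (F j) := by
  simp only [radAvg_eq, Finset.sum_comm (s := s), sum_div]

theorem radAvg_const_mul (c : ℝ) (F : (Fin n → ℝ) → ℝ) :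
    radAvg n (fun σ => c * F σ) = c * radAvg n F := by
  simp only [radAvg_eq, ← mul_sum, mul_div_assoc]

theorem radAvg_comp_neg (F : (Fin n → ℝ) → ℝ) : radAvg n (fun σ => F (-σ)) = radAvg n F := by
  have hneg (ε : Fin n → Bool) : -signVector ε = signVector (fun i => !ε i) := by
    ext i; cases h : ε i <;> simp [signVector, h]
  have hinv : Involutive fun (ε : Fin n → Bool) i => !ε i := fun ε => by simp
  simp only [radAvg_eq, hneg, hinv.sum_comp fun ε => F (signVector ε)]

theorem Real.exp_radAvg_le (F : (Fin n → ℝ) → ℝ) :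
    Real.exp (radAvg n F) ≤ radAvg n (fun σ => Real.exp (F σ)) := by
  have hw : ∑ _ε : Fin n → Bool, ((2 : ℝ) ^ n)⁻¹ = 1 := by simp
  have := convexOn_exp.map_sum_le (t := univ) (p := fun ε => F (signVector ε))
    (fun _ _ => by positivity) hw (fun _ _ => Set.mem_univ _)
  simpa only [radAvg_eq, smul_eq_mul, inv_mul_eq_div, sum_div] using this

theorem radAvg_exp_dotProduct (v : Fin n → ℝ) :
    radAvg n (fun σ => Real.exp (σ ⬝ᵥ v)) = ∏ i, Real.cosh (v i) := by
  have hsum (ε : Fin n → Bool) : Real.exp (signVector ε ⬝ᵥ v) =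
      ∏ i, Real.exp ((if ε i then (1 : ℝ) else -1) * v i) := Real.exp_sum _ _
  have hcosh (i : Fin n) : ∑ b : Bool, Real.exp ((if b then (1 : ℝ) else -1) * v i) =
      2 * Real.cosh (v i) := by
    simp [Real.cosh_eq]; ring
  rw [radAvg_eq, sum_congr rfl fun ε _ => hsum ε,
    ← Fintype.prod_sum fun i (b : Bool) => Real.exp ((if b then (1 : ℝ) else -1) * v i),
    prod_congr rfl fun i _ => hcosh i, prod_mul_distrib, prod_const, card_univ, Fintype.card_fin,
    mul_div_cancel_left₀]
  positivity

theorem radAvg_exp_dotProduct_le (v : Fin n → ℝ) :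
    radAvg n (fun σ => Real.exp (σ ⬝ᵥ v)) ≤ Real.exp (∑ i, v i ^ 2 / 2) := by
  rw [radAvg_exp_dotProduct, Real.exp_sum]
  exact prod_le_prod (fun i _ => (Real.cosh_pos _).le) fun i _ => Real.cosh_le_exp_half_sq _

end RademacherAverage

theorem Bornology.IsBounded.image_of_norm_le {E F : Type*} [SeminormedAddCommGroup E]
    [SeminormedAddCommGroup F] {S : Set E} (hS : Bornology.IsBounded S) {f : E → F}
    (hf : ∀ x, ‖f x‖ ≤ ‖x‖) : Bornology.IsBounded (f '' S) := by
  obtain ⟨C, hC⟩ := isBounded_iff_forall_norm_le.1 hS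
  exact isBounded_iff_forall_norm_le.2 ⟨C, by rintro _ ⟨x, hx, rfl⟩; exact (hf x).trans (hC x hx)⟩

section Contraction

variable {n : ℕ} {S : Set (Fin n → ℝ)} {φ : ℝ → ℝ} {l : ℝ}

theorem radAvg_exp_supportFun_update_le (hS : Bornology.IsBounded S) (hS0 : S.Nonempty)
    (hφ : LipschitzWith 1 φ) (hφ0 : φ 0 = 0) (hl : 0 ≤ l) (k : Fin n) :
    radAvg n (fun σ => Real.exp (l * supportFun ((fun a => update a k (φ (a k))) '' S) σ)) ≤
      radAvg n (fun σ => Real.exp (l * supportFun S σ)) := by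
  rw [radAvg_eq, radAvg_eq]
  gcongr ?_ / _
  refine Fintype.sum_le_sum_of_involutive (fun ε => update ε k (!ε k)) (fun ε => by simp)
    fun ε => ?_
  wlog hε : ε k = true generalizing ε
  · rw [Bool.not_eq_true] at hε
    have hε' : update (update ε k true) k false = ε := by
      rw [update_idem, ← hε, update_eq_self]
    simpa only [update_self, Bool.not_true, hε', hε, Bool.not_false, add_comm] using
      this (update ε k true) (update_self ..)
  have hσ : signVector (update ε k (!ε k)) = update (signVector ε) k (-1) := by
    rw [signVector_update, hε]; rfl
  rw [hσ]
  exact supportFun_update_add_le hS hS0 hφ hφ0 hl k (by simp [signVector, hε])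

theorem radAvg_exp_supportFun_comp_le (hS : Bornology.IsBounded S) (hS0 : S.Nonempty)
    (hφ : LipschitzWith 1 φ) (hφ0 : φ 0 = 0) (hl : 0 ≤ l) :
    radAvg n (fun σ => Real.exp (l * supportFun ((φ ∘ ·) '' S) σ)) ≤
      radAvg n (fun σ => Real.exp (l * supportFun S σ)) := by
  suffices ∀ s : Finset (Fin n), radAvg n (fun σ => Real.exp
      (l * supportFun ((fun a => s.piecewise (φ ∘ a) a) '' S) σ)) ≤
        radAvg n (fun σ => Real.exp (l * supportFun S σ)) by
    simpa only [piecewise_univ] using this univ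
  intro s
  induction s using Finset.induction_on with
  | empty => simp only [piecewise_empty, Set.image_id', le_refl]
  | insert k s hk ih =>
    set T := (fun a => s.piecewise (φ ∘ a) a) '' S
    have hT : Bornology.IsBounded T := hS.image_of_norm_le fun a =>
      (pi_norm_le_iff_of_nonneg (norm_nonneg a)).2 fun i => by
        by_cases hi : i ∈ s
        · simpa [hi, Real.norm_eq_abs] using (hφ.abs_apply_le hφ0 (a i)).trans (norm_le_pi_norm a i)
        · simpa [hi] using norm_le_pi_norm a i
    have himage : (fun a => (insert k s).piecewise (φ ∘ a) a) '' S =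
        (fun b => update b k (φ (b k))) '' T := by
      rw [Set.image_image]
      congr! 2 with a
      rw [piecewise_insert, piecewise_eq_of_notMem _ _ _ hk, comp_apply]
    rw [himage]
    exact (radAvg_exp_supportFun_update_le hT (hS0.image _) hφ hφ0 hl k).trans ih

end Contraction

def absConvexCombinations {ι : Type*} (T : Set (ι → ℝ)) : Set (ι → ℝ) :=
  {b | ∃ (k : ℕ) (c : Fin k → ℝ) (t : Fin k → ι → ℝ),
    (∀ j, t j ∈ T) ∧ ∑ j, |c j| ≤ 1 ∧ b = ∑ j, c j • t j}

section SupportFunBounds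

variable {n : ℕ} {S T : Set (Fin n → ℝ)} {l : ℝ}

theorem supportFun_le_max_of_subset_absConvexCombinations (hT : Bornology.IsBounded T)
    (hT0 : T.Nonempty) (hS : S ⊆ absConvexCombinations T) (σ : Fin n → ℝ) :
    supportFun S σ ≤ max (supportFun T σ) (supportFun T (-σ)) := by
  set M := max (supportFun T σ) (supportFun T (-σ))
  have habs : ∀ t ∈ T, |σ ⬝ᵥ t| ≤ M := fun t ht => abs_le'.2
    ⟨le_max_of_le_left (dotProduct_le_supportFun hT ht σ),
      le_max_of_le_right (neg_dotProduct σ t ▸ dotProduct_le_supportFun hT ht (-σ))⟩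
  have hM : 0 ≤ M := (abs_nonneg _).trans (habs _ hT0.some_mem)
  refine Real.sSup_le ?_ hM
  rintro _ ⟨b, hb, rfl⟩
  obtain ⟨k, c, t, ht, hc, rfl⟩ := hS hb
  calc σ ⬝ᵥ ∑ j, c j • t j = ∑ j, c j * (σ ⬝ᵥ t j) := by simp [dotProduct_sum, dotProduct_smul]
    _ ≤ ∑ j, |c j| * M := sum_le_sum fun j _ =>
        (le_abs_self _).trans (abs_mul (c j) _ ▸ mul_le_mul_of_nonneg_left (habs _ (ht j))
          (abs_nonneg _))
    _ = (∑ j, |c j|) * M := (sum_mul ..).symm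
    _ ≤ M := mul_le_of_le_one_left hM hc

theorem radAvg_exp_supportFun_le_two_mul (hT : Bornology.IsBounded T) (hT0 : T.Nonempty)
    (hS : S ⊆ absConvexCombinations T) (hl : 0 ≤ l) :
    radAvg n (fun σ => Real.exp (l * supportFun S σ)) ≤
      2 * radAvg n (fun σ => Real.exp (l * supportFun T σ)) := by
  calc radAvg n (fun σ => Real.exp (l * supportFun S σ))
      ≤ radAvg n (fun σ => Real.exp (l * supportFun T σ) + Real.exp (l * supportFun T (-σ))) :=
        radAvg_mono fun σ => by
          refine (Real.exp_le_exp.2 (mul_le_mul_of_nonneg_left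
            (supportFun_le_max_of_subset_absConvexCombinations hT hT0 hS σ) hl)).trans ?_
          rw [mul_max_of_nonneg _ _ hl, Real.exp_monotone.map_max]
          exact max_le_add_of_nonneg (Real.exp_pos _).le (Real.exp_pos _).le
    _ = 2 * radAvg n (fun σ => Real.exp (l * supportFun T σ)) := by
        rw [radAvg_add, radAvg_comp_neg (fun σ => Real.exp (l * supportFun T σ)), two_mul]

theorem radAvg_exp_supportFun_le_of_subset_range {κ : Type*} [Fintype κ] {w : κ → Fin n → ℝ}
    (hS : S ⊆ Set.range w) (hS0 : S.Nonempty) {C : ℝ} (hw : ∀ j i, |w j i| ≤ C) (l : ℝ) :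
    radAvg n (fun σ => Real.exp (l * supportFun S σ)) ≤
      Fintype.card κ * Real.exp (n * (l * C) ^ 2 / 2) := by
  have hmax (σ : Fin n → ℝ) : Real.exp (l * supportFun S σ) ≤
      ∑ j, Real.exp (σ ⬝ᵥ l • w j) := by
    obtain ⟨a, ha, hj⟩ := Set.Nonempty.csSup_mem (hS0.image (σ ⬝ᵥ ·))
      (((Set.finite_range w).subset hS).image _)
    obtain ⟨j, rfl⟩ := hS ha
    rw [supportFun, ← hj, ← smul_eq_mul, ← dotProduct_smul]
    exact single_le_sum (f := fun j => Real.exp (σ ⬝ᵥ l • w j)) (fun _ _ => (Real.exp_pos _).le)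
      (mem_univ j)
  have hsq (j : κ) : ∑ i, (l • w j) i ^ 2 / 2 ≤ n * (l * C) ^ 2 / 2 := by
    calc ∑ i, (l • w j) i ^ 2 / 2 ≤ ∑ _i : Fin n, (l * C) ^ 2 / 2 := sum_le_sum fun i _ => by
          have := sq_le_sq' (abs_le.1 (hw j i)).1 (abs_le.1 (hw j i)).2
          simp only [Pi.smul_apply, smul_eq_mul, mul_pow]
          gcongr
      _ = n * (l * C) ^ 2 / 2 := by simp [mul_div_assoc]
  calc radAvg n (fun σ => Real.exp (l * supportFun S σ))
      ≤ radAvg n (fun σ => ∑ j, Real.exp (σ ⬝ᵥ l • w j)) := radAvg_mono hmax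
    _ = ∑ j, radAvg n (fun σ => Real.exp (σ ⬝ᵥ l • w j)) := radAvg_sum _ _
    _ ≤ ∑ _j : κ, Real.exp (n * (l * C) ^ 2 / 2) := sum_le_sum fun j _ =>
        (radAvg_exp_dotProduct_le _).trans (Real.exp_le_exp.2 (hsq j))
    _ = Fintype.card κ * Real.exp (n * (l * C) ^ 2 / 2) := by simp

end SupportFunBounds

theorem le_sqrt_of_forall_pos_mul_le {R K c : ℝ} (hK : 0 < K) (hc : 0 ≤ c)
    (h : ∀ l > 0, l * R ≤ K + l ^ 2 * c / 2) : R ≤ √(2 * K * c) := by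
  rcases hc.eq_or_lt with rfl | hc
  · by_contra! hR
    rw [mul_zero, Real.sqrt_zero] at hR
    have := h ((K + 1) / R) (by positivity)
    rw [div_mul_cancel₀ _ hR.ne'] at this
    linarith
  -- the optimal Chernoff parameter is `l = √(2Kc) / c`
  set s := √(2 * K * c)
  have hs : 0 < s := Real.sqrt_pos.2 (by positivity)
  have hs2 : s ^ 2 = 2 * K * c := Real.sq_sqrt (by positivity)
  have := h (s / c) (by positivity)
  have hsR : s * R ≤ s * s := by
    field_simp at this
    nlinarith
  exact le_of_mul_le_mul_left hsR hs

section Network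

variable {d : ℕ} {V : ℝ}

def sampleProjection {α : Type*} {n : ℕ} (X : Fin n → α) (F : Set (α → ℝ)) : Set (Fin n → ℝ) :=
  (fun f i => f (X i)) '' F

theorem deepReluClass_succ (L : ℕ) :
    deepReluClass d (L + 1) V = reluLayer d (deepReluClass d L V) :=
  iterate_succ_apply' _ _ _

theorem zero_mem_reluLayer (F : Set ((Fin d → ℝ) → ℝ)) : 0 ∈ reluLayer d F :=
  ⟨0, Fin.elim0, Fin.elim0, Fin.rec0, by simp, fun _ => by simp⟩

theorem abs_apply_le_of_mem_reluLayer {F : Set ((Fin d → ℝ) → ℝ)} {x : Fin d → ℝ} (hV : 0 ≤ V)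
    (hF : ∀ g ∈ F, |g x| ≤ V) {f : (Fin d → ℝ) → ℝ} (hf : f ∈ reluLayer d F) : |f x| ≤ V := by
  obtain ⟨k, c, g, hg, hc, hfx⟩ := hf
  rw [hfx]
  calc |∑ j, c j * max (g j x) 0| ≤ ∑ j, |c j| * V := (abs_sum_le_sum_abs _ _).trans <|
        sum_le_sum fun j _ => abs_mul (c j) _ ▸ mul_le_mul_of_nonneg_left
          ((LipschitzWith.id.max_const 0).abs_apply_le (max_self 0) _ |>.trans (hF _ (hg j)))
          (abs_nonneg _)
    _ = (∑ j, |c j|) * V := (sum_mul ..).symm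
    _ ≤ V := mul_le_of_le_one_left hV hc

theorem abs_apply_le_of_mem_deepReluClass (hV : 0 ≤ V) {x : Fin d → ℝ} (hx : ∀ j, |x j| ≤ 1)
    (L : ℕ) {f : (Fin d → ℝ) → ℝ} (hf : f ∈ deepReluClass d L V) : |f x| ≤ V := by
  induction L generalizing f with
  | zero =>
    obtain ⟨j, rfl | rfl⟩ := hf <;>
    simpa only [abs_neg, abs_mul, abs_of_nonneg hV] using mul_le_of_le_one_right hV (hx j)
  | succ L ih =>
    rw [deepReluClass_succ] at hf
    exact abs_apply_le_of_mem_reluLayer hV (fun g hg => ih hg) hf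

theorem deepReluClass_nonempty (hd : 0 < d) (L : ℕ) : (deepReluClass d L V).Nonempty := by
  cases L with
  | zero => exact ⟨_, ⟨⟨0, hd⟩, Or.inl rfl⟩⟩
  | succ L => exact ⟨0, deepReluClass_succ L ▸ zero_mem_reluLayer _⟩

variable {n : ℕ} {X : Fin n → Fin d → ℝ}

theorem isBounded_sampleProjection_deepReluClass (hV : 0 ≤ V) (hX : ∀ i j, |X i j| ≤ 1)
    (L : ℕ) : Bornology.IsBounded (sampleProjection X (deepReluClass d L V)) :=
  isBounded_iff_forall_norm_le.2 ⟨V, by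
    rintro _ ⟨f, hf, rfl⟩
    exact (pi_norm_le_iff_of_nonneg hV).2 fun i =>
      abs_apply_le_of_mem_deepReluClass hV (hX i) L hf⟩

theorem sampleProjection_reluLayer_subset (F : Set ((Fin d → ℝ) → ℝ)) :
    sampleProjection X (reluLayer d F) ⊆
      absConvexCombinations (((fun x => max x 0) ∘ ·) '' sampleProjection X F) := by
  rintro _ ⟨f, ⟨k, c, g, hg, hc, hfx⟩, rfl⟩
  refine ⟨k, c, fun j i => max (g j (X i)) 0, fun j => ⟨_, ⟨g j, hg j, rfl⟩, rfl⟩, hc, ?_⟩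
  ext i
  simp [hfx]

theorem sampleProjection_initClass_subset :
    sampleProjection X (initClass d V) ⊆
      Set.range fun (p : Fin d × Bool) i => (if p.2 then V else -V) * X i p.1 := by
  rintro _ ⟨f, ⟨j, rfl | rfl⟩, rfl⟩
  exacts [⟨(j, true), by simp⟩, ⟨(j, false), by simp⟩]

end Network

theorem radAvg_exp_supportFun_deepReluClass_le {d n : ℕ} (hd : 0 < d) {V : ℝ} (hV : 0 ≤ V)
    {X : Fin n → Fin d → ℝ} (hX : ∀ i j, |X i j| ≤ 1) {l : ℝ} (hl : 0 ≤ l) (L : ℕ) :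
    radAvg n (fun σ => Real.exp (l * supportFun (sampleProjection X (deepReluClass d L V)) σ)) ≤
      2 ^ L * (2 * d * Real.exp (n * (l * V) ^ 2 / 2)) := by
  induction L with
  | zero =>
    have hw : ∀ (p : Fin d × Bool) i, |(if p.2 then V else -V) * X i p.1| ≤ V := fun p i => by
      rw [abs_mul, show |if p.2 then V else -V| = V by split_ifs <;> simp [abs_of_nonneg hV]]
      exact mul_le_of_le_one_right hV (hX i p.1)
    have := radAvg_exp_supportFun_le_of_subset_range
      (S := sampleProjection X (deepReluClass d 0 V)) sampleProjection_initClass_subset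
      ((deepReluClass_nonempty hd 0).image _) hw l
    simpa [mul_comm] using this
  | succ L ih =>
    set A := sampleProjection X (deepReluClass d L V)
    have hA := isBounded_sampleProjection_deepReluClass hV hX L
    have hA0 : A.Nonempty := (deepReluClass_nonempty hd L).image _
    have hrelu : LipschitzWith 1 fun x : ℝ => max x 0 := LipschitzWith.id.max_const 0
    have hreluA : Bornology.IsBounded (((fun x => max x 0) ∘ ·) '' A) :=
      hA.image_of_norm_le fun a => (pi_norm_le_iff_of_nonneg (norm_nonneg a)).2 fun i =>
        (hrelu.abs_apply_le (max_self 0) (a i)).trans (norm_le_pi_norm a i)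
    calc _ ≤ 2 * radAvg n (fun σ =>
            Real.exp (l * supportFun (((fun x => max x 0) ∘ ·) '' A) σ)) :=
          radAvg_exp_supportFun_le_two_mul hreluA (hA0.image _)
            (deepReluClass_succ (V := V) L ▸ sampleProjection_reluLayer_subset _) hl
      _ ≤ 2 * radAvg n (fun σ => Real.exp (l * supportFun A σ)) :=
          mul_le_mul_of_nonneg_left (radAvg_exp_supportFun_comp_le hA hA0 hrelu (max_self 0) hl)
            zero_le_two
      _ ≤ 2 ^ (L + 1) * (2 * d * Real.exp (n * (l * V) ^ 2 / 2)) := by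
          rw [pow_succ']; linarith

/-- **complexity bound for ReLU networks.** For inputs in `[−1,1]^d`,
the empirical Rademacher complexity of `ℱ_{L,V}` satisfies
`E[sup_{f∈ℱ_{L,V}} ∑ᵢ ξᵢ f(Xᵢ)] ≤ V √(2n(L log 2 + log(2d)))`. -/
theorem deep_relu_rademacher_complexity_bound
    (d n L : ℕ) (hd : 0 < d) (V : ℝ) (hV : 0 ≤ V)
    (X : Fin n → Fin d → ℝ) (hX : ∀ i j, |X i j| ≤ 1) :
    radAvg n (fun ξ => sSup ((fun f => ∑ i, ξ i * f (X i)) '' deepReluClass d L V))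
      ≤ V * Real.sqrt (2 * n * (L * Real.log 2 + Real.log (2 * d))) := by
  set K := L * Real.log 2 + Real.log (2 * d)
  have hK : 0 < K := add_pos_of_nonneg_of_pos (by positivity)
    (Real.log_pos (by norm_cast; omega))
  set A := sampleProjection X (deepReluClass d L V)
  have hR : (fun ξ => sSup ((fun f => ∑ i, ξ i * f (X i)) '' deepReluClass d L V)) =
      supportFun A := by
    ext ξ; simp only [supportFun, A, sampleProjection, Set.image_image]; rfl
  have hchernoff : ∀ l > 0, l * radAvg n (supportFun A) ≤ K + l ^ 2 * (n * V ^ 2) / 2 := by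
    intro l hl
    rw [← Real.exp_le_exp, ← radAvg_const_mul]
    calc Real.exp (radAvg n fun σ => l * supportFun A σ)
        ≤ radAvg n (fun σ => Real.exp (l * supportFun A σ)) := Real.exp_radAvg_le _
      _ ≤ 2 ^ L * (2 * d * Real.exp (n * (l * V) ^ 2 / 2)) :=
          radAvg_exp_supportFun_deepReluClass_le hd hV hX hl.le L
      _ = Real.exp (K + l ^ 2 * (n * V ^ 2) / 2) := by
          rw [Real.exp_add, Real.exp_add, Real.exp_nat_mul, Real.exp_log two_pos,
            Real.exp_log (by positivity)]
          ring_nf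
  calc radAvg n _ = radAvg n (supportFun A) := by rw [hR]
    _ ≤ √(2 * K * (n * V ^ 2)) := le_sqrt_of_forall_pos_mul_le hK (by positivity) hchernoff
    _ = V * √(2 * n * K) := by
        rw [show 2 * K * (n * V ^ 2) = V ^ 2 * (2 * n * K) by ring, Real.sqrt_mul (sq_nonneg V),
          Real.sqrt_sq hV]
end
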